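/- arXiv:2103.05097 — 2 statements merged into one kernel-verified Lean document; each statement's English description precedes it below -/
import Mathlib

section
/- Let X be a real Banach space containing an isomorphic copy of ℓ₁(Γ) for some set Γ of cardinality ℵ₁, i.e., there exist a linear map T : ℓ₁(Γ) → X and constants 0 < c ≤ C such that c·‖f‖ ≤ ‖T(f)‖ ≤ C·‖f‖ for all f ∈ ℓ₁(Γ). Then cov(X) = ℵ₁. -/
open Cardinal Set

universe u v

noncomputable section

/-- A hyperplane of a normed space: the kernel of a nonzero continuous linear functional. -/
def IsHyperplane {X : Type u} [NormedAddCommGroup X] [NormedSpace ℝ X] (H : Set X) : Prop :=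
  ∃ f : X →L[ℝ] ℝ, f ≠ 0 ∧ H = {x | f x = 0}

/-- Member of the σ-ideal generated by hyperplanes: covered by countably many hyperplanes. -/
def InHyperplaneIdeal {X : Type u} [NormedAddCommGroup X] [NormedSpace ℝ X] (Y : Set X) : Prop :=
  ∃ F : Set (Set X), F.Countable ∧ (∀ H ∈ F, IsHyperplane H) ∧ Y ⊆ ⋃₀ F

/-- Additivity of the hyperplane σ-ideal. -/
def addH (X : Type u) [NormedAddCommGroup X] [NormedSpace ℝ X] : Cardinal.{u} :=
  sInf {c | ∃ F : Set (Set X), (∀ A ∈ F, InHyperplaneIdeal A) ∧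
    ¬ InHyperplaneIdeal (⋃₀ F) ∧ #F = c}

/-- Covering number of the hyperplane σ-ideal. -/
def covH (X : Type u) [NormedAddCommGroup X] [NormedSpace ℝ X] : Cardinal.{u} :=
  sInf {c | ∃ F : Set (Set X), (∀ A ∈ F, InHyperplaneIdeal A) ∧ ⋃₀ F = Set.univ ∧ #F = c}

/-- Uniformity of the hyperplane σ-ideal. -/
def nonH (X : Type u) [NormedAddCommGroup X] [NormedSpace ℝ X] : Cardinal.{u} :=
  sInf {c | ∃ Y : Set X, ¬ InHyperplaneIdeal Y ∧ #Y = c}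

/-- Cofinality of the hyperplane σ-ideal. -/
def cofH (X : Type u) [NormedAddCommGroup X] [NormedSpace ℝ X] : Cardinal.{u} :=
  sInf {c | ∃ F : Set (Set X), (∀ A ∈ F, InHyperplaneIdeal A) ∧
    (∀ Y : Set X, InHyperplaneIdeal Y → ∃ A ∈ F, Y ⊆ A) ∧ #F = c}

/-- Density of a topological space: least cardinality of a dense subset. -/
def densH (X : Type u) [TopologicalSpace X] : Cardinal.{u} :=
  sInf {c | ∃ D : Set X, Dense D ∧ #D = c}

/-- `cf([κ]^ω)`: least cardinality of a cofinal family of countable subsets of κ. -/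
def cfCtblSubsets (κ : Cardinal.{u}) : Cardinal.{u} :=
  sInf {c | ∃ F : Set (Set κ.out), (∀ S ∈ F, S.Countable) ∧
    (∀ S : Set κ.out, S.Countable → ∃ T ∈ F, S ⊆ T) ∧ #F = c}

/-- A compact space has small diagonal. -/
def HasSmallDiagonal (K : Type u) [TopologicalSpace K] : Prop :=
  ∀ A : Set (K × K), #A = Cardinal.aleph 1 → A ∩ Set.diagonal K = ∅ →
    ∃ B ⊆ A, ¬ B.Countable ∧ closure B ∩ Set.diagonal K = ∅

/-- A topological space is scattered. -/
def IsScattered (K : Type u) [TopologicalSpace K] : Prop :=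
  ∀ S : Set K, S.Nonempty → ∃ x ∈ S, ∃ U : Set K, IsOpen U ∧ U ∩ S = {x}

/-!
Extend the functionals `f ↦ ∑_{δ ∈ F} ε_δ f(δ)` on `ℓ₁(Γ)`, for every finite `F ⊆ Γ` and every
choice of signs `ε`, through `T` by Hahn–Banach, and average them against the Rademacher
functions. By Bessel's inequality this gives functionals `φ_γ`, `γ ∈ F`, of norm at most `1/c`
with `φ_γ (T e_γ) = 1` and `∑_γ φ_γ(x)² ≤ (‖x‖/c)²`; a weak-* cluster point as `F` grows yields
such a family `ψ_γ` for all `γ ∈ Γ`. Each `x` then has `ψ_γ x ≠ 0` for only countably many `γ`,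
so the `ℵ₁` hyperplanes `ker ψ_γ` cover `X`, while by Baire's theorem no countably many
hyperplanes cover a Banach space.
-/

open Filter Topology

section Rademacher

variable {ι : Type*}

def rademacher (i : ι) (σ : ι → Bool) : ℝ := if σ i then 1 else -1

lemma rademacher_mul_self (i : ι) (σ : ι → Bool) : rademacher i σ * rademacher i σ = 1 := by
  unfold rademacher; split <;> norm_num

variable [Fintype ι] [DecidableEq ι]

lemma sum_rademacher_mul_rademacher (i j : ι) :
    ∑ σ : ι → Bool, rademacher i σ * rademacher j σ =
      if i = j then (Fintype.card (ι → Bool) : ℝ) else 0 := by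
  split_ifs with hij
  · subst hij
    simp [rademacher_mul_self, Finset.card_univ]
  -- flipping the `i`-th sign negates `rademacher i` and leaves `rademacher j` unchanged
  refine Finset.sum_involution (fun σ _ => Function.update σ i (!σ i)) (fun σ _ => ?_)
    (fun σ _ _ h => ?_) (fun _ _ => Finset.mem_univ _) (fun σ _ => ?_)
  · simp only [rademacher, Function.update_self, Function.update_of_ne (Ne.symm hij)]
    cases σ i <;> cases σ j <;> norm_num
  · simpa using congrFun h i
  · simp

/-- Bessel's inequality for the orthogonal family of Rademacher functions on `ι → Bool`. -/
lemma sum_sq_rademacher_average_le {r : (ι → Bool) → ℝ} {B : ℝ} (hr : ∀ σ, |r σ| ≤ B) :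
    ∑ i, ((Fintype.card (ι → Bool) : ℝ)⁻¹ * ∑ σ, rademacher i σ * r σ) ^ 2 ≤ B ^ 2 := by
  set m : ℝ := (Fintype.card (ι → Bool) : ℝ)
  have hm : 0 < m := by positivity
  have inner_toLp (f g : (ι → Bool) → ℝ) :
      inner ℝ (WithLp.toLp 2 f : EuclideanSpace ℝ (ι → Bool)) (WithLp.toLp 2 g) =
        ∑ σ, f σ * g σ := by
    simp [PiLp.inner_apply, mul_comm]
  let v (i : ι) : EuclideanSpace ℝ (ι → Bool) := (√m)⁻¹ • WithLp.toLp 2 (rademacher i)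
  have hv : Orthonormal ℝ v := by
    rw [orthonormal_iff_ite]
    intro i j
    rw [real_inner_smul_left, real_inner_smul_right, inner_toLp, sum_rademacher_mul_rademacher]
    split_ifs
    · rw [← mul_assoc, ← mul_inv, Real.mul_self_sqrt hm.le, inv_mul_cancel₀ hm.ne']
    · simp
  have hnorm : ‖(WithLp.toLp 2 r : EuclideanSpace ℝ (ι → Bool))‖ ^ 2 ≤ m * B ^ 2 := by
    rw [EuclideanSpace.norm_sq_eq]
    calc ∑ σ, ‖r σ‖ ^ 2 ≤ ∑ _σ : ι → Bool, B ^ 2 := by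
          gcongr with σ
          exact (Real.norm_eq_abs _).trans_le (hr σ)
      _ = m * B ^ 2 := by simp [m, Finset.card_univ]
  have hcoef (i : ι) : (m⁻¹ * ∑ σ, rademacher i σ * r σ) ^ 2 =
      m⁻¹ * ‖inner ℝ (v i) (WithLp.toLp 2 r)‖ ^ 2 := by
    rw [real_inner_smul_left, inner_toLp, Real.norm_eq_abs, sq_abs, mul_pow, mul_pow, inv_pow,
      inv_pow, Real.sq_sqrt hm.le]
    ring
  calc ∑ i, (m⁻¹ * ∑ σ, rademacher i σ * r σ) ^ 2
      = m⁻¹ * ∑ i, ‖inner ℝ (v i) (WithLp.toLp 2 r)‖ ^ 2 := by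
        rw [Finset.mul_sum]; exact Finset.sum_congr rfl fun i _ => hcoef i
    _ ≤ m⁻¹ * (m * B ^ 2) := by gcongr; exact (hv.sum_inner_products_le _).trans hnorm
    _ = B ^ 2 := by field_simp

end Rademacher

section BesselFamily

variable {E X : Type*} [NormedAddCommGroup E] [NormedSpace ℝ E]
  [NormedAddCommGroup X] [NormedSpace ℝ X]

lemma exists_extension_norm_le_of_le_norm_apply (T : E →ₗ[ℝ] X) {c : ℝ} (hc : 0 < c)
    (hT : ∀ g, c * ‖g‖ ≤ ‖T g‖) (φ : StrongDual ℝ E) :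
    ∃ ξ : StrongDual ℝ X, ‖ξ‖ ≤ c⁻¹ * ‖φ‖ ∧ ∀ g, ξ (T g) = φ g := by
  have hinj : Function.Injective T := by
    refine (injective_iff_map_eq_zero T).2 fun g hg => norm_le_zero_iff.1 ?_
    have := hT g
    rw [hg, norm_zero] at this
    exact nonpos_of_mul_nonpos_right this hc
  let e := LinearEquiv.ofInjective T hinj
  have he (y : LinearMap.range T) : ‖e.symm y‖ ≤ c⁻¹ * ‖y‖ := by
    rw [le_inv_mul_iff₀ hc]
    simpa [e] using hT (e.symm y)
  let ξ₀ : StrongDual ℝ (LinearMap.range T) :=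
    (φ.toLinearMap ∘ₗ e.symm.toLinearMap).mkContinuous (c⁻¹ * ‖φ‖) fun y =>
      calc ‖φ (e.symm y)‖ ≤ ‖φ‖ * ‖e.symm y‖ := φ.le_opNorm _
        _ ≤ ‖φ‖ * (c⁻¹ * ‖y‖) := by gcongr; exact he y
        _ = c⁻¹ * ‖φ‖ * ‖y‖ := by ring
  obtain ⟨ξ, hξ, hnorm⟩ := exists_extension_norm_eq _ ξ₀
  refine ⟨ξ, hnorm ▸ LinearMap.mkContinuous_norm_le _ (by positivity) _, fun g => ?_⟩
  exact (hξ (e g)).trans (congrArg φ (e.symm_apply_apply g))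

lemma exists_dual_apply_single_eq {Γ : Type*} [DecidableEq Γ]
    (T : lp (fun _ : Γ => ℝ) 1 →ₗ[ℝ] X) {c : ℝ} (hc : 0 < c) (hT : ∀ g, c * ‖g‖ ≤ ‖T g‖)
    (F : Finset Γ) (s : F → ℝ) (hs : ∀ i, |s i| ≤ 1) :
    ∃ ξ : StrongDual ℝ X, ‖ξ‖ ≤ c⁻¹ ∧ ∀ i : F, ξ (T (lp.single 1 (i : Γ) 1)) = s i := by
  let φ : StrongDual ℝ (lp (fun _ : Γ => ℝ) 1) := ∑ i : F, s i • lp.evalCLM ℝ _ 1 (i : Γ)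
  have hφ_apply (f : lp (fun _ : Γ => ℝ) 1) : φ f = ∑ i : F, s i * f i := by
    simp only [φ, Finset.univ_eq_attach, sum_apply, smul_apply, smul_eq_mul]
    rfl
  have hφ_norm : ‖φ‖ ≤ 1 := by
    refine ContinuousLinearMap.opNorm_le_bound _ zero_le_one fun f => ?_
    have hsum : ∑ γ ∈ F, ‖f γ‖ ≤ ‖f‖ := by
      simpa using lp.sum_rpow_le_norm_rpow (by norm_num) f F
    rw [hφ_apply, one_mul]
    calc ‖∑ i : F, s i * f i‖ ≤ ∑ i : F, ‖f i‖ := by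
          refine (norm_sum_le _ _).trans (Finset.sum_le_sum fun i _ => ?_)
          rw [norm_mul]
          exact mul_le_of_le_one_left (norm_nonneg _) (hs i)
      _ ≤ ‖f‖ := by rwa [Finset.sum_coe_sort F (fun γ => ‖f γ‖)]
  obtain ⟨ξ, hξ_norm, hξ⟩ := exists_extension_norm_le_of_le_norm_apply T hc hT φ
  refine ⟨ξ, hξ_norm.trans (mul_le_of_le_one_right (inv_nonneg.2 hc.le) hφ_norm), fun i => ?_⟩
  rw [hξ, hφ_apply]
  simp [lp.single_apply, Pi.single_apply]

theorem exists_sum_sq_le_of_forall_rademacher {ι : Type*} [Fintype ι] [DecidableEq ι]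
    (u : ι → X) {K : ℝ}
    (h : ∀ σ : ι → Bool, ∃ ξ : StrongDual ℝ X, ‖ξ‖ ≤ K ∧ ∀ i, ξ (u i) = rademacher i σ) :
    ∃ φ : ι → StrongDual ℝ X, (∀ i, φ i (u i) = 1) ∧ ∀ x, ∑ i, (φ i x) ^ 2 ≤ (K * ‖x‖) ^ 2 := by
  choose ξ hξ_norm hξ using h
  set m : ℝ := (Fintype.card (ι → Bool) : ℝ)
  have hφ (i : ι) (x : X) :
      (m⁻¹ • ∑ σ, rademacher i σ • ξ σ) x = m⁻¹ * ∑ σ, rademacher i σ * ξ σ x := by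
    simp only [smul_apply, sum_apply, smul_eq_mul]
  refine ⟨fun i => m⁻¹ • ∑ σ, rademacher i σ • ξ σ, fun i => ?_, fun x => ?_⟩
  · rw [hφ]
    simp only [hξ, rademacher_mul_self, Finset.sum_const, Finset.card_univ, nsmul_eq_mul, mul_one]
    exact inv_mul_cancel₀ (by positivity)
  · simp only [hφ]
    refine sum_sq_rademacher_average_le fun σ => ?_
    calc |ξ σ x| ≤ ‖ξ σ‖ * ‖x‖ := (ξ σ).le_opNorm x
      _ ≤ K * ‖x‖ := by gcongr; exact hξ_norm σ

/-- Banach–Alaoglu turns the finite families into a single one, as a weak-* limit along an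
ultrafilter on `Finset Γ` finer than `atTop`. -/
theorem exists_sum_sq_le_of_forall_finset {Γ : Type*} (u : Γ → X) {K : ℝ}
    (h : ∀ F : Finset Γ, ∃ φ : F → StrongDual ℝ X,
      (∀ i, φ i (u i) = 1) ∧ ∀ x, ∑ i, (φ i x) ^ 2 ≤ (K * ‖x‖) ^ 2) :
    ∃ ψ : Γ → StrongDual ℝ X,
      (∀ γ, ψ γ (u γ) = 1) ∧ ∀ x (S : Finset Γ), ∑ γ ∈ S, (ψ γ x) ^ 2 ≤ (K * ‖x‖) ^ 2 := by
  classical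
  choose φ hφ_one hφ_sum using h
  have hφ_norm (F : Finset Γ) (i : F) : ‖φ F i‖ ≤ |K| := by
    refine ContinuousLinearMap.opNorm_le_bound _ (abs_nonneg K) fun x => ?_
    have hsq : (φ F i x) ^ 2 ≤ (K * ‖x‖) ^ 2 :=
      (Finset.single_le_sum (fun j _ => sq_nonneg (φ F j x)) (Finset.mem_univ i)).trans
        (hφ_sum F x)
    simpa [abs_mul] using sq_le_sq.1 hsq
  let a (γ : Γ) (F : Finset Γ) : WeakDual ℝ X :=
    if hγ : γ ∈ F then StrongDual.toWeakDual (φ F ⟨γ, hγ⟩) else 0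
  have ha (F : Finset Γ) (i : F) : a i F = StrongDual.toWeakDual (φ F i) := dif_pos i.2
  let U : Ultrafilter (Finset Γ) := Ultrafilter.of atTop
  have hU (S : Finset Γ) : ∀ᶠ F in (U : Filter (Finset Γ)), S ⊆ F :=
    Ultrafilter.of_le _ (eventually_ge_atTop S)
  have hlim (γ : Γ) : ∃ ψ, Tendsto (a γ) U (𝓝 ψ) := by
    have hball : (U.map (a γ) : Filter (WeakDual ℝ X)) ≤
        𝓟 (WeakDual.toStrongDual ⁻¹' Metric.closedBall 0 |K|) := by
      rw [Ultrafilter.coe_map, le_principal_iff, mem_map]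
      filter_upwards [hU {γ}] with F hF
      rw [Finset.singleton_subset_iff] at hF
      rw [Set.mem_preimage, Set.mem_preimage, mem_closedBall_zero_iff,
        show a γ F = _ from ha F ⟨γ, hF⟩]
      exact hφ_norm F ⟨γ, hF⟩
    obtain ⟨ψ, -, hψ⟩ := (WeakDual.isCompact_closedBall 0 |K|).ultrafilter_le_nhds _ hball
    exact ⟨ψ, hψ⟩
  choose ψ hψ using hlim
  have heval (γ : Γ) (x : X) : Tendsto (fun F => a γ F x) U (𝓝 (ψ γ x)) :=
    ((WeakDual.eval_continuous x).tendsto _).comp (hψ γ)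
  refine ⟨fun γ => WeakDual.toStrongDual (ψ γ), fun γ => ?_, fun x S => ?_⟩
  · refine tendsto_nhds_unique (heval γ (u γ)) (tendsto_const_nhds.congr' ?_)
    filter_upwards [hU {γ}] with F hF
    rw [Finset.singleton_subset_iff] at hF
    exact (congrArg (· (u γ)) (ha F ⟨γ, hF⟩)).trans (hφ_one F ⟨γ, hF⟩) |>.symm
  · refine le_of_tendsto (tendsto_finsetSum S fun γ _ => (heval γ x).pow 2) ?_
    filter_upwards [hU S] with F hF
    calc ∑ γ ∈ S, (a γ F x) ^ 2 ≤ ∑ γ ∈ F, (a γ F x) ^ 2 :=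
          Finset.sum_le_sum_of_subset_of_nonneg hF fun _ _ _ => sq_nonneg _
      _ = ∑ i : F, (φ F i x) ^ 2 := by
          rw [← Finset.sum_coe_sort F]
          exact Finset.sum_congr rfl fun i _ => by rw [ha]; rfl
      _ ≤ (K * ‖x‖) ^ 2 := hφ_sum F x

end BesselFamily

lemma exists_eq_zero_of_sum_sq_le {Γ : Type*} [Uncountable Γ] {f : Γ → ℝ} {B : ℝ}
    (hf : ∀ S : Finset Γ, ∑ γ ∈ S, f γ ^ 2 ≤ B) : ∃ γ, f γ = 0 := by
  have hsupp := (summable_of_sum_le (fun γ => sq_nonneg (f γ)) hf).countable_support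
  by_contra! h
  exact not_countable_univ (hsupp.mono fun γ _ => pow_ne_zero 2 (h γ))

section HyperplaneIdeal

variable {X : Type u} [NormedAddCommGroup X] [NormedSpace ℝ X]

lemma IsHyperplane.isClosed {H : Set X} (hH : IsHyperplane H) : IsClosed H := by
  obtain ⟨f, -, rfl⟩ := hH
  exact isClosed_eq f.continuous continuous_const

lemma IsHyperplane.interior_eq_empty {H : Set X} (hH : IsHyperplane H) : interior H = ∅ := by
  obtain ⟨f, hf, rfl⟩ := hH
  by_contra hne
  have hker : LinearMap.ker (f : X →ₗ[ℝ] ℝ) = ⊤ :=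
    Submodule.eq_top_of_nonempty_interior' _ (Set.nonempty_iff_ne_empty.2 hne)
  exact hf (ContinuousLinearMap.coe_injective (LinearMap.ker_eq_top.1 hker))

lemma IsHyperplane.inHyperplaneIdeal {H : Set X} (hH : IsHyperplane H) : InHyperplaneIdeal H :=
  ⟨{H}, countable_singleton H, fun _ h => (mem_singleton_iff.1 h).symm ▸ hH,
    subset_sUnion_of_mem rfl⟩

lemma InHyperplaneIdeal.sUnion {𝒜 : Set (Set X)} (h𝒜 : 𝒜.Countable)
    (h : ∀ A ∈ 𝒜, InHyperplaneIdeal A) : InHyperplaneIdeal (⋃₀ 𝒜) := by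
  choose G hG_countable hG_hyperplane hG_cover using h
  refine ⟨⋃ A ∈ 𝒜, G A ‹_›, h𝒜.biUnion hG_countable, fun H hH => ?_, ?_⟩
  · obtain ⟨A, hA, hH⟩ := mem_iUnion₂.1 hH
    exact hG_hyperplane A hA H hH
  · rintro x ⟨A, hA, hx⟩
    obtain ⟨H, hH, hxH⟩ := hG_cover A hA hx
    exact ⟨H, mem_iUnion₂.2 ⟨A, hA, hH⟩, hxH⟩

lemma not_inHyperplaneIdeal_univ [CompleteSpace X] : ¬ InHyperplaneIdeal (Set.univ : Set X) := by
  rintro ⟨G, hG, hG_hyperplane, hcover⟩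
  have : Countable G := hG.to_subtype
  obtain ⟨H, hH⟩ := nonempty_interior_of_iUnion_of_closed (f := fun H : G => (H : Set X))
    (fun H => (hG_hyperplane H H.2).isClosed) (by rwa [← sUnion_eq_iUnion, ← univ_subset_iff])
  exact hH.ne_empty (hG_hyperplane H H.2).interior_eq_empty

lemma aleph_one_le_mk_of_sUnion_eq_univ [CompleteSpace X] {𝒜 : Set (Set X)}
    (h𝒜 : ∀ A ∈ 𝒜, InHyperplaneIdeal A) (hcover : ⋃₀ 𝒜 = Set.univ) : ℵ₁ ≤ #𝒜 := by
  rw [← succ_aleph0, Order.succ_le_iff, lt_iff_not_ge, le_aleph0_iff_set_countable]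
  intro h𝒜_countable
  exact not_inHyperplaneIdeal_univ (hcover ▸ InHyperplaneIdeal.sUnion h𝒜_countable h𝒜)

theorem covH_eq_aleph_one_of_forall_exists_apply_eq_zero [CompleteSpace X] {Γ : Type*}
    (hΓ : #Γ ≤ ℵ₁) (ψ : Γ → StrongDual ℝ X) (hψ : ∀ γ, ψ γ ≠ 0)
    (hcover : ∀ x, ∃ γ, ψ γ x = 0) : covH X = ℵ₁ := by
  set 𝒦 : Set (Set X) := range fun γ => {x | ψ γ x = 0}
  have h𝒦 : ∀ A ∈ 𝒦, InHyperplaneIdeal A := by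
    rintro _ ⟨γ, rfl⟩
    exact IsHyperplane.inHyperplaneIdeal ⟨ψ γ, hψ γ, rfl⟩
  have h𝒦_cover : ⋃₀ 𝒦 = Set.univ := eq_univ_of_forall fun x =>
    let ⟨γ, hγ⟩ := hcover x
    ⟨_, mem_range_self γ, hγ⟩
  have h𝒦_card : #𝒦 ≤ ℵ₁ := by
    simpa using (mk_range_le_lift (f := fun γ => {x : X | ψ γ x = 0})).trans (lift_le.{u}.2 hΓ)
  refine IsLeast.csInf_eq ⟨⟨𝒦, h𝒦, h𝒦_cover, ?_⟩, ?_⟩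
  · exact h𝒦_card.antisymm (aleph_one_le_mk_of_sUnion_eq_univ h𝒦 h𝒦_cover)
  · rintro _ ⟨𝒜, h𝒜, hcover, rfl⟩
    exact aleph_one_le_mk_of_sUnion_eq_univ h𝒜 hcover

end HyperplaneIdeal

theorem stmt15_general (X : Type u) [NormedAddCommGroup X] [NormedSpace ℝ X] [CompleteSpace X]
    (Γ : Type v) (hΓ : #Γ = Cardinal.aleph 1)
    (T : lp (fun _ : Γ => ℝ) 1 →ₗ[ℝ] X) (c C : ℝ) (hc : 0 < c)
    (hbound : ∀ g : lp (fun _ : Γ => ℝ) 1, c * ‖g‖ ≤ ‖T g‖ ∧ ‖T g‖ ≤ C * ‖g‖) :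
    covH X = Cardinal.aleph 1 := by
  classical
  have hT g := (hbound g).1
  obtain ⟨ψ, hψ_one, hψ_sum⟩ := exists_sum_sq_le_of_forall_finset (fun γ => T (lp.single 1 γ 1))
    fun F => exists_sum_sq_le_of_forall_rademacher _ fun σ =>
      exists_dual_apply_single_eq T hc hT F (rademacher · σ) fun i => by
        simp [rademacher, apply_ite]
  have : Uncountable Γ := by rw [← aleph0_lt_mk_iff, hΓ]; exact aleph0_lt_aleph_one
  refine covH_eq_aleph_one_of_forall_exists_apply_eq_zero hΓ.le ψ
    (fun γ h => by simpa [h] using hψ_one γ) fun x => ?_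
  exact exists_eq_zero_of_sum_sq_le (hψ_sum x)

/-- a Banach space containing an isomorphic copy of ℓ₁(Γ), |Γ| = ℵ₁,
satisfies cov(X) = ℵ₁. -/
theorem stmt15 (X : Type u) [NormedAddCommGroup X] [NormedSpace ℝ X] [CompleteSpace X]
    (Γ : Type v) (hΓ : #Γ = Cardinal.aleph 1)
    (T : lp (fun _ : Γ => ℝ) 1 →ₗ[ℝ] X) (c C : ℝ) (hc : 0 < c) (hcC : c ≤ C)
    (hbound : ∀ g : lp (fun _ : Γ => ℝ) 1, c * ‖g‖ ≤ ‖T g‖ ∧ ‖T g‖ ≤ C * ‖g‖) :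
    covH X = Cardinal.aleph 1 :=
  stmt15_general X Γ hΓ T c C hc hbound

end
end

section
/- Let n ≥ 1 be a natural number and let X be a real Banach space with dens(X) = ℵ_n. Then non(X) = ℵ_n; moreover cf([ℵ_n]^ω) = ℵ_n. -/
/-!
A countable subset of `ω_{m+1}` is bounded, because `ℵ_{m+1}` is regular, so by induction on `m`
the countable subsets of a set of size `ℵ_m` have a cofinal family of size `ℵ_m`; conversely every
such family covers the set by countable pieces, so for `m ≥ 1` it has at least `ℵ_m` members.

If `|Y| < dens X` (and `dens X` is uncountable), the closed linear span of `Y` has a dense subset of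
size `max(ℵ₀, |Y|)` built from the spans of its finite subsets, so it is a proper closed subspace
and `Y` lies in a single hyperplane; hence `non(X) ≥ dens X`.

For the other inequality fix a dense `D` of size `ℵ_n` and a cofinal family `F` of countable
subsets of `D`. Through each `T ∈ F`, enumerated as `(d_k)`, runs the entire curve
`γ_T(t) = ∑ c_k t^k d_k` (with small `c_k > 0`): a functional that does not vanish on `T` makes
`t ↦ φ(γ_T(t))` a nonzero entire function, so it vanishes at finitely many `t ∈ [0,1]`.
A nonzero functional does not vanish on `D`; given countably many hyperplanes, witnesses of this
all lie in one `T ∈ F`, and then `γ_T(t)` avoids all of them for some `t` in a fixed set of `ℵ₁`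
parameters. These `ℵ_n · ℵ₁` points form a set of size `ℵ_n` outside `H_σ(X)`.
-/

open Cardinal Set

universe u v

noncomputable section

def IsCountableCofinal {α : Type*} (F : Set (Set α)) : Prop :=
  (∀ S ∈ F, S.Countable) ∧ ∀ S : Set α, S.Countable → ∃ T ∈ F, S ⊆ T

namespace IsCountableCofinal

variable {α β : Type u}

lemma preimage {F : Set (Set β)} (hF : IsCountableCofinal F) {ι : α → β}
    (hι : Function.Injective ι) : IsCountableCofinal ((ι ⁻¹' ·) '' F) := by
  refine ⟨?_, fun S hS => ?_⟩
  · rintro _ ⟨T, hT, rfl⟩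
    exact (hF.1 T hT).preimage hι
  · obtain ⟨T, hT, hST⟩ := hF.2 (ι '' S) (hS.image ι)
    exact ⟨ι ⁻¹' T, mem_image_of_mem _ hT, image_subset_iff.1 hST⟩

lemma iUnion_image_val {ι : Type*} {s : ι → Set α}
    (hs : ∀ S : Set α, S.Countable → ∃ i, S ⊆ s i) {G : ∀ i, Set (Set (s i))}
    (hG : ∀ i, IsCountableCofinal (G i)) :
    IsCountableCofinal (⋃ i, (Subtype.val '' ·) '' G i) := by
  refine ⟨?_, fun S hS => ?_⟩
  · simp only [mem_iUnion, mem_image]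
    rintro _ ⟨i, T, hT, rfl⟩
    exact ((hG i).1 T hT).image _
  · obtain ⟨i, hSi⟩ := hs S hS
    obtain ⟨T, hT, hST⟩ := (hG i).2 (Subtype.val ⁻¹' S) (hS.preimage Subtype.val_injective)
    refine ⟨Subtype.val '' T, mem_iUnion.2 ⟨i, mem_image_of_mem _ hT⟩, fun x hx => ?_⟩
    exact ⟨⟨x, hSi hx⟩, hST hx, rfl⟩

lemma mk_le_mul_aleph0 {F : Set (Set α)} (hF : IsCountableCofinal F) : #α ≤ #F * ℵ₀ := by
  have hcover : ⋃₀ F = Set.univ := eq_univ_of_forall fun a => by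
    obtain ⟨T, hT, haT⟩ := hF.2 {a} (countable_singleton a)
    exact ⟨T, hT, haT rfl⟩
  calc #α = #(⋃₀ F) := by rw [hcover, mk_univ]
    _ ≤ #F * ⨆ T : F, #(T : Set α) := mk_sUnion_le F
    _ ≤ #F * ℵ₀ := by
      gcongr
      exact ciSup_le' fun T => mk_le_aleph0_iff.2 (hF.1 T T.2).to_subtype

lemma mk_le {F : Set (Set α)} (hF : IsCountableCofinal F) (hα : ℵ₀ < #α) : #α ≤ #F := by
  by_contra! hlt
  have := hF.mk_le_mul_aleph0.trans (mul_le_max _ _)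
  exact this.not_gt (max_lt (max_lt hlt hα) hα)

end IsCountableCofinal

lemma exists_isCountableCofinal_of_aleph0_lt_cof {α : Type u} [LinearOrder α]
    (hα : ℵ₀ < Order.cof α) {μ : Cardinal.{u}}
    (h : ∀ b : α, ∃ G : Set (Set (Iio b)), IsCountableCofinal G ∧ #G ≤ μ) :
    ∃ F : Set (Set α), IsCountableCofinal F ∧ #F ≤ #α * μ := by
  choose G hG hGμ using h
  have hbdd : ∀ S : Set α, S.Countable → ∃ b, S ⊆ Iio b := fun S hS =>
    not_isCofinal_iff.1 fun hcof => ((Order.cof_le hcof).trans hS.le_aleph0).not_gt hα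
  refine ⟨_, IsCountableCofinal.iUnion_image_val hbdd hG, (mk_iUnion_le _).trans ?_⟩
  gcongr
  exact ciSup_le' fun b => mk_image_le.trans (hGμ b)

lemma exists_isCountableCofinal_of_mk_le_aleph (m : ℕ) {α : Type u} (hα : #α ≤ ℵ_ m) :
    ∃ F : Set (Set α), IsCountableCofinal F ∧ #F ≤ ℵ_ m := by
  induction m generalizing α with
  | zero =>
    have : Countable α := mk_le_aleph0_iff.1 (by simpa using hα)
    refine ⟨{Set.univ}, ⟨?_, fun S _ => ⟨Set.univ, rfl, subset_univ S⟩⟩, by simp⟩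
    rintro _ rfl
    exact countable_univ
  | succ m ih =>
    set κ : Cardinal.{u} := ℵ_ (m + 1 : ℕ)
    have hκ : κ = Order.succ (ℵ_ m) := by simp [κ, succ_aleph]
    have hcof : Order.cof κ.ord.ToType = κ := by
      rw [Ordinal.cof_toType, hκ, succ_aleph]
      exact (isRegular_aleph_add_one _).cof_ord
    have hIio (b : κ.ord.ToType) : #(Iio b) ≤ ℵ_ m := by
      have := mk_Iio_lt b (by rw [mk_ord_toType, Ordinal.type_toType])
      rw [mk_ord_toType] at this
      exact Order.lt_succ_iff.1 (this.trans_eq hκ)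
    obtain ⟨F, hF, hFκ⟩ := exists_isCountableCofinal_of_aleph0_lt_cof
      (by rw [hcof]; exact aleph0_lt_aleph.2 (by simp)) fun b => ih (hIio b)
    obtain ⟨ι⟩ : Nonempty (α ↪ κ.ord.ToType) := by rw [← le_def, mk_ord_toType]; exact hα
    refine ⟨_, hF.preimage ι.injective, mk_image_le.trans (hFκ.trans ?_)⟩
    rw [mk_ord_toType, mul_eq_left (aleph0_le_aleph _) ((Order.le_succ _).trans_eq hκ.symm)
      (aleph_pos _).ne']

lemma sInf_setOf_exists_mk_eq {α : Type*} {P : α → Prop} {f : α → Cardinal.{u}}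
    {κ : Cardinal.{u}} (hκ : ∀ a, P a → κ ≤ f a) {a : α} (ha : P a) (haκ : f a ≤ κ) :
    sInf {c | ∃ a, P a ∧ f a = c} = κ :=
  IsLeast.csInf_eq ⟨⟨a, ha, haκ.antisymm (hκ a ha)⟩, by rintro _ ⟨b, hb, rfl⟩; exact hκ b hb⟩

lemma cfCtblSubsets_aleph {n : ℕ} (hn : n ≠ 0) :
    cfCtblSubsets (ℵ_ n : Cardinal.{u}) = ℵ_ n := by
  have hcf : cfCtblSubsets (ℵ_ n) =
      sInf {c | ∃ F : Set (Set (ℵ_ n).out), IsCountableCofinal F ∧ #F = c} := by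
    simp only [cfCtblSubsets, IsCountableCofinal, and_assoc]
  have hout : #(ℵ_ n : Cardinal.{u}).out = ℵ_ n := mk_out _
  obtain ⟨F, hF, hFcard⟩ := exists_isCountableCofinal_of_mk_le_aleph n hout.le
  have hℵ₀ : ℵ₀ < #(ℵ_ n : Cardinal.{u}).out :=
    (aleph0_lt_aleph.2 (by simpa [pos_iff_ne_zero] using hn)).trans_eq hout.symm
  exact hcf.trans
    (sInf_setOf_exists_mk_eq (fun G hG => hout.symm.trans_le (hG.mk_le hℵ₀)) hF hFcard)

lemma densH_le_mk {X : Type u} [TopologicalSpace X] {D : Set X} (hD : Dense D) : densH X ≤ #D :=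
  csInf_le' ⟨D, hD, rfl⟩

lemma exists_dense_mk_eq_densH (X : Type u) [TopologicalSpace X] :
    ∃ D : Set X, Dense D ∧ #D = densH X :=
  csInf_mem (s := {c | ∃ D : Set X, Dense D ∧ #D = c}) ⟨_, univ, dense_univ, rfl⟩

lemma exists_span_subset_closure_mk_le {E : Type u} [AddCommGroup E] [Module ℝ E]
    [TopologicalSpace E] [ContinuousAdd E] [ContinuousSMul ℝ E] (Y : Set E) :
    ∃ D : Set E, (Submodule.span ℝ Y : Set E) ⊆ closure D ∧ #D ≤ max ℵ₀ #Y := by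
  have hsep (l : List Y) :
      TopologicalSpace.IsSeparable (Submodule.span ℝ (Subtype.val '' {y | y ∈ l}) : Set E) :=
    (l.finite_toSet.image _).isSeparable.span
  choose C hC hspan using hsep
  refine ⟨⋃ l, C l, fun x hx => ?_, (mk_iUnion_le _).trans ?_⟩
  · obtain ⟨n, c, y, rfl⟩ := Submodule.mem_span_set'.1 hx
    have hmem :
        ∑ i, c i • (y i : E) ∈ Submodule.span ℝ (Subtype.val '' {z | z ∈ List.ofFn y}) :=
      Submodule.sum_mem _ fun i _ =>
        Submodule.smul_mem _ _ (Submodule.subset_span ⟨y i, List.mem_ofFn.2 ⟨i, rfl⟩, rfl⟩)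
    exact closure_mono (subset_iUnion _ _) (hspan _ hmem)
  · calc #(List Y) * ⨆ l, #(C l) ≤ max ℵ₀ #Y * ℵ₀ := by
          gcongr
          · exact mk_list_le_max _
          · exact ciSup_le' fun l => (hC l).le_aleph0
      _ = max ℵ₀ #Y := mul_aleph0_eq (le_max_left _ _)

lemma exists_ne_zero_forall_mem_eq_zero_of_ne_top {E : Type*} [TopologicalSpace E] [AddCommGroup E]
    [IsTopologicalAddGroup E] [Module ℝ E] [ContinuousSMul ℝ E] [LocallyConvexSpace ℝ E]
    {Z : Submodule ℝ E} (hZ : IsClosed (Z : Set E)) (hZ' : Z ≠ ⊤) :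
    ∃ f : E →L[ℝ] ℝ, f ≠ 0 ∧ ∀ z ∈ Z, f z = 0 := by
  obtain ⟨x, hx⟩ : ∃ x, x ∉ Z := by
    by_contra! h
    exact hZ' (eq_top_iff.2 fun x _ => h x)
  obtain ⟨f, u, hfZ, hux⟩ := geometric_hahn_banach_closed_point Z.convex hZ hx
  have hu : 0 < u := by simpa using hfZ 0 Z.zero_mem
  refine ⟨f, fun hf => by simp [hf] at hux; linarith, fun z hz => ?_⟩
  -- `f` is bounded above on the subspace `Z`, which forces it to vanish there
  by_contra hfz
  have := hfZ _ (Z.smul_mem (u / f z) hz)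
  rw [map_smul, smul_eq_mul, div_mul_cancel₀ _ hfz] at this
  exact this.false

lemma exists_ne_zero_forall_mem_eq_zero_of_max_lt_densH {X : Type u} [NormedAddCommGroup X]
    [NormedSpace ℝ X] {Y : Set X} (hY : max ℵ₀ #Y < densH X) :
    ∃ f : X →L[ℝ] ℝ, f ≠ 0 ∧ ∀ y ∈ Y, f y = 0 := by
  obtain ⟨D, hspan, hD⟩ := exists_span_subset_closure_mk_le Y
  have hZ : (Submodule.span ℝ Y).topologicalClosure ≠ ⊤ := by
    intro htop
    refine (densH_le_mk ?_).not_gt (hD.trans_lt hY)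
    refine dense_iff_closure_eq.2 (eq_univ_of_forall fun x => ?_)
    have hx : x ∈ (Submodule.span ℝ Y).topologicalClosure := htop ▸ Submodule.mem_top
    exact closure_minimal hspan isClosed_closure hx
  obtain ⟨f, hf, hfZ⟩ := exists_ne_zero_forall_mem_eq_zero_of_ne_top
    (Submodule.isClosed_topologicalClosure _) hZ
  exact ⟨f, hf, fun y hy => hfZ y (Submodule.le_topologicalClosure _ (Submodule.subset_span hy))⟩

lemma densH_le_mk_of_not_inHyperplaneIdeal {X : Type u} [NormedAddCommGroup X]
    [NormedSpace ℝ X] (hX : ℵ₀ < densH X) {Y : Set X} (hY : ¬ InHyperplaneIdeal Y) :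
    densH X ≤ #Y := by
  by_contra! hlt
  obtain ⟨f, hf, hfY⟩ := exists_ne_zero_forall_mem_eq_zero_of_max_lt_densH (max_lt hX hlt)
  exact hY ⟨{{x | f x = 0}}, countable_singleton _, by rintro _ rfl; exact ⟨f, hf, rfl⟩,
    fun y hy => ⟨_, rfl, hfY y hy⟩⟩

section Curve

variable {E : Type*} [NormedAddCommGroup E] [NormedSpace ℝ E]

-- The weights make the series entire while keeping the `n`-th coefficient a positive multiple
-- of `e n`.
def entireCurveSeries (e : ℕ → E) : FormalMultilinearSeries ℝ ℝ E := fun n =>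
  ContinuousMultilinearMap.mkPiRing ℝ (Fin n) ((n.factorial * (1 + ‖e n‖))⁻¹ • e n)

lemma entireCurveSeries_radius (e : ℕ → E) : (entireCurveSeries e).radius = ⊤ := by
  refine FormalMultilinearSeries.radius_eq_top_of_summable_norm _ fun r => ?_
  refine (Real.summable_pow_div_factorial r).of_nonneg_of_le (fun n => by positivity) fun n => ?_
  have he : ‖e n‖ / (1 + ‖e n‖) ≤ 1 := div_le_one_of_le₀ (by linarith) (by positivity)
  rw [entireCurveSeries, ContinuousMultilinearMap.norm_mkPiRing, norm_smul,
    Real.norm_of_nonneg (by positivity)]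
  calc (n.factorial * (1 + ‖e n‖))⁻¹ * ‖e n‖ * r ^ n
        = ‖e n‖ / (1 + ‖e n‖) * (r ^ n / n.factorial) := by field_simp
    _ ≤ r ^ n / n.factorial := mul_le_of_le_one_left (by positivity) he

lemma finite_zeros_entireCurveSeries_sum [CompleteSpace E] (e : ℕ → E) {f : E →L[ℝ] ℝ}
    (hf : ∃ k, f (e k) ≠ 0) :
    {t ∈ Icc (0 : ℝ) 1 | f ((entireCurveSeries e).sum t) = 0}.Finite := by
  set p := entireCurveSeries e
  have hp : HasFPowerSeriesOnBall p.sum p 0 ⊤ := by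
    simpa [p, entireCurveSeries_radius] using
      p.hasFPowerSeriesOnBall (by simp [p, entireCurveSeries_radius])
  have hfp := f.comp_hasFPowerSeriesOnBall hp
  have han : AnalyticOnNhd ℝ (f ∘ p.sum) univ := by
    simpa [Metric.eball_top] using hfp.analyticOnNhd
  rcases han.eqOn_zero_or_eventually_ne_zero_of_preconnected isPreconnected_univ with h0 | hne
  · obtain ⟨k, hk⟩ := hf
    have hzero := hfp.hasFPowerSeriesAt.locally_zero_iff.1 (.of_forall fun t => h0 (mem_univ t))
    have hcoeff := congr_arg (fun q => q k fun _ => 1) hzero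
    have h1 : 1 + ‖e k‖ ≠ 0 := by positivity
    simp [p, entireCurveSeries, hk, h1, k.factorial_ne_zero] at hcoeff
  · exact (isCompact_Icc.finite_sdiff_of_mem_codiscreteWithin
      (Filter.codiscreteWithin_mono (subset_univ _) hne)).subset fun t ht => ⟨ht.1, not_not.2 ht.2⟩

lemma exists_curve_finite_zeros_of_countable [CompleteSpace E] {S : Set E} (hS : S.Countable) :
    ∃ γ : ℝ → E, ∀ f : E →L[ℝ] ℝ, (∃ x ∈ S, f x ≠ 0) →
      {t ∈ Icc (0 : ℝ) 1 | f (γ t) = 0}.Finite := by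
  obtain ⟨e, he⟩ := countable_iff_exists_subset_range.1 hS
  refine ⟨(entireCurveSeries e).sum, fun f ⟨x, hx, hfx⟩ => ?_⟩
  obtain ⟨k, rfl⟩ := he hx
  exact finite_zeros_entireCurveSeries_sum e ⟨k, hfx⟩

end Curve

section Hyperplanes

variable {X : Type u} [NormedAddCommGroup X] [NormedSpace ℝ X]

lemma not_inHyperplaneIdeal_of_forall {Y : Set X}
    (h : ∀ Φ : Set (X →L[ℝ] ℝ), Φ.Countable → 0 ∉ Φ → ∃ y ∈ Y, ∀ φ ∈ Φ, φ y ≠ 0) :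
    ¬ InHyperplaneIdeal Y := by
  rintro ⟨H, hHc, hH, hYH⟩
  choose! φ hφ0 hφH using hH
  obtain ⟨y, hy, hφy⟩ := h (φ '' H) (hHc.image φ) fun ⟨K, hK, hK0⟩ => hφ0 K hK hK0
  obtain ⟨K, hK, hyK⟩ := hYH hy
  rw [hφH K hK] at hyK
  exact hφy _ (mem_image_of_mem φ hK) hyK

lemma exists_not_inHyperplaneIdeal_mk_le [CompleteSpace X] {D : Set X} (hD : Dense D)
    {F : Set (Set D)} (hF : IsCountableCofinal F) :
    ∃ Y : Set X, ¬ InHyperplaneIdeal Y ∧ #Y ≤ #F * ℵ₁ := by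
  choose γ hγ using fun T : F =>
    exists_curve_finite_zeros_of_countable ((hF.1 T T.2).image Subtype.val)
  obtain ⟨A, hA⟩ : ∃ A : Set (Icc (0 : ℝ) 1), #A = ℵ₁ :=
    le_mk_iff_exists_set.1 (by rw [mk_Icc_real zero_lt_one]; exact aleph_one_le_continuum)
  refine ⟨⋃ T : F, (fun t : Icc (0 : ℝ) 1 => γ T t) '' A, not_inHyperplaneIdeal_of_forall ?_, ?_⟩
  · intro Φ hΦ hΦ0
    have hwit (φ : Φ) : ∃ d : D, φ.1 d ≠ 0 := by
      by_contra! h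
      have hφD : EqOn φ.1 (0 : X →L[ℝ] ℝ) D := fun x hx => h ⟨x, hx⟩
      exact hΦ0 (ContinuousLinearMap.ext_on (hD.mono Submodule.subset_span) hφD ▸ φ.2)
    choose d hd using hwit
    have : Countable Φ := hΦ.to_subtype
    obtain ⟨T, hT, hdT⟩ := hF.2 (range d) (countable_range d)
    have hfin (φ) (hφ : φ ∈ Φ) : {t ∈ Icc (0 : ℝ) 1 | φ (γ ⟨T, hT⟩ t) = 0}.Finite :=
      hγ ⟨T, hT⟩ φ ⟨d ⟨φ, hφ⟩, mem_image_of_mem _ (hdT (mem_range_self _)), hd ⟨φ, hφ⟩⟩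
    have hbad : (⋃ φ ∈ Φ, {t : Icc (0 : ℝ) 1 | φ (γ ⟨T, hT⟩ t) = 0}).Countable :=
      hΦ.biUnion fun φ hφ => ((hfin φ hφ).countable.preimage Subtype.val_injective).mono
        fun t ht => mem_sep t.2 ht
    have hAunc : ¬ A.Countable := by
      rw [← le_aleph0_iff_set_countable, hA, not_le]
      exact aleph0_lt_aleph_one
    obtain ⟨t, htA, ht⟩ := not_subset.1 fun hsub => hAunc (hbad.mono hsub)
    exact ⟨γ ⟨T, hT⟩ t, mem_iUnion.2 ⟨⟨T, hT⟩, mem_image_of_mem _ htA⟩,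
      fun φ hφ hφt => ht (mem_biUnion hφ hφt)⟩
  · refine (mk_iUnion_le _).trans (mul_le_mul' le_rfl (ciSup_le' fun T => ?_))
    have := mk_image_le_lift (f := fun t : Icc (0 : ℝ) 1 => γ T t) (s := A)
    rw [hA] at this
    simpa using this

end Hyperplanes

/-- if dens(X) = ℵ_n for n ≥ 1, then non(X) = ℵ_n and cf([ℵ_n]^ω) = ℵ_n. -/
theorem stmt17 (n : ℕ) (hn : 1 ≤ n)
    (X : Type u) [NormedAddCommGroup X] [NormedSpace ℝ X] [CompleteSpace X]
    (hdens : densH X = Cardinal.aleph n) :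
    nonH X = Cardinal.aleph n ∧
      cfCtblSubsets (Cardinal.aleph n : Cardinal.{u}) = Cardinal.aleph n := by
  have hℵ₁ : ℵ₁ ≤ ℵ_ n := aleph_le_aleph.2 (by exact_mod_cast hn)
  refine ⟨?_, cfCtblSubsets_aleph (by omega)⟩
  obtain ⟨D, hD, hDcard⟩ := exists_dense_mk_eq_densH X
  obtain ⟨F, hF, hFcard⟩ := exists_isCountableCofinal_of_mk_le_aleph n (hDcard.trans hdens).le
  obtain ⟨Y, hY, hYcard⟩ := exists_not_inHyperplaneIdeal_mk_le hD hF
  refine sInf_setOf_exists_mk_eq (fun Z hZ => ?_) hY (hYcard.trans ?_)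
  · exact hdens ▸ densH_le_mk_of_not_inHyperplaneIdeal (hdens ▸ aleph_one_le_iff.1 hℵ₁) hZ
  · calc #F * ℵ₁ ≤ ℵ_ n * ℵ_ n := mul_le_mul' hFcard hℵ₁
      _ = ℵ_ n := mul_eq_self (aleph0_le_aleph _)

end
end
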